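/- arXiv:0804.2704 — 2 statements merged into one kernel-verified Lean document; each statement's English description precedes it below -/
import Mathlib

section
/- For every continuous function f : [0, 1/(L²−1)] → ℝ, the normalized trace of f applied to the hierarchical Laplacean converges: lim_{K→∞} L^{−dK} Σ_{k=0}^{K} m_k^{(K)} f(λ_k^{(K)}) = (1 − L^{−d}) Σ_{k=0}^∞ L^{−dk} f( L^{−2k}/(L² − 1) ), where λ_k^{(K)} = (L^{−2k} − L^{−2K})/(L²−1) are the eigenvalues of −Δ on ℝ^{Λ_K} and m_k^{(K)} = L^{d(K−k)} − L^{d(K−k−1)} for k ≤ K−1, m_K^{(K)} = 1, their multiplicities. Equivalently, the empirical spectral distributions of −Δ converge weakly, as K → ∞, to the probability measure ρ = (1 − L^{−d}) Σ_{k=0}^∞ L^{−dk} δ_{L^{−2k}/(L²−1)}. -/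
open Filter Topology

/-- The eigenvalues `λ_k^{(K)} = (L^{−2k} − L^{−2K})/(L² − 1)` of the hierarchical
Laplacean `−Δ` on `ℝ^{Λ_K}`. -/
noncomputable def hierEig (L K : ℕ) (k : ℕ) : ℝ :=
  (((L : ℝ) ^ (2 * k))⁻¹ - ((L : ℝ) ^ (2 * K))⁻¹) / ((L : ℝ) ^ 2 - 1)

/-!
With `r = L^{-d}`, the multiplicity `m_k^{(K)}` of `λ_k^{(K)}` is `L^{dK} (1 - r) r^k` for
`k < K`, so the normalized trace is `(1 - r) Σ_{k<K} r^k f(λ_k^{(K)}) + r^K f(0)`. As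
`K → ∞` each eigenvalue `λ_k^{(K)}` increases to `L^{-2k}/(L² - 1)`, and `f` is bounded on
the spectrum, so Tannery's theorem (dominated convergence for series, with the geometric
dominant `C r^k`) passes to the limit term by term, while `r^K f(0) → 0`.
-/

theorem tendsto_sum_range_of_dominated {G : Type*} [NormedAddCommGroup G] [CompleteSpace G]
    {F : ℕ → ℕ → G} {g : ℕ → G} {bound : ℕ → ℝ} (h_sum : Summable bound)
    (h_lim : ∀ k, Tendsto (F · k) atTop (𝓝 (g k)))
    (h_bound : ∀ K, ∀ k < K, ‖F K k‖ ≤ bound k) :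
    Tendsto (fun K => ∑ k ∈ Finset.range K, F K k) atTop (𝓝 (∑' k, g k)) := by
  have h_sum_eq (K : ℕ) :
      ∑ k ∈ Finset.range K, F K k = ∑' k, if k < K then F K k else 0 := by
    rw [tsum_eq_sum (s := Finset.range K) fun k hk => if_neg (by simpa using hk)]
    exact Finset.sum_congr rfl fun k hk => (if_pos (Finset.mem_range.mp hk)).symm
  simp_rw [h_sum_eq]
  refine tendsto_tsum_of_dominated_convergence h_sum (fun k => ?_) (.of_forall fun K k => ?_)
  · refine (h_lim k).congr' ?_
    filter_upwards [eventually_gt_atTop k] with K hK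
    rw [if_pos hK]
  · split_ifs with hk
    · exact h_bound K k hk
    · simpa using (norm_nonneg _).trans (h_bound (k + 1) k k.lt_succ_self)

theorem inv_pow_mul_sub_pow {𝕜 : Type*} [Field 𝕜] {x : 𝕜} (hx : x ≠ 0) {k K : ℕ}
    (hk : k < K) : (x ^ K)⁻¹ * (x ^ (K - k) - x ^ (K - k - 1)) = (1 - x⁻¹) * x⁻¹ ^ k := by
  obtain ⟨j, rfl⟩ := Nat.exists_eq_add_of_lt hk
  rw [show k + j + 1 - k = j + 1 by omega, show j + 1 - 1 = j by omega, inv_pow]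
  field_simp
  ring

theorem hierEig_self (L K : ℕ) : hierEig L K K = 0 := by
  simp [hierEig]

section

variable {L : ℕ} (hL : 1 < L)
include hL

theorem hierEig_mem_Icc {k K : ℕ} (hk : k ≤ K) :
    hierEig L K k ∈ Set.Icc 0 ((L : ℝ) ^ 2 - 1)⁻¹ := by
  have hL' : (1 : ℝ) < L := by exact_mod_cast hL
  have hden : 0 < (L : ℝ) ^ 2 - 1 := by nlinarith
  have h_anti : ((L : ℝ) ^ (2 * K))⁻¹ ≤ ((L : ℝ) ^ (2 * k))⁻¹ :=
    inv_anti₀ (by positivity) (pow_le_pow_right₀ hL'.le (by omega))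
  have h_le_one : ((L : ℝ) ^ (2 * k))⁻¹ ≤ 1 := inv_le_one_of_one_le₀ (one_le_pow₀ hL'.le)
  have h_pos : 0 < ((L : ℝ) ^ (2 * K))⁻¹ := by positivity
  rw [hierEig, div_eq_mul_inv]
  constructor <;> nlinarith [inv_pos.mpr hden]

theorem tendsto_hierEig (k : ℕ) :
    Tendsto (hierEig L · k) atTop (𝓝 (((L : ℝ) ^ (2 * k))⁻¹ / ((L : ℝ) ^ 2 - 1))) := by
  have hL' : (1 : ℝ) < L := by exact_mod_cast hL
  have hq : ((L : ℝ) ^ 2)⁻¹ < 1 := inv_lt_one_of_one_lt₀ (one_lt_pow₀ hL' two_ne_zero)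
  have h := ((tendsto_pow_atTop_nhds_zero_of_lt_one (by positivity) hq).const_sub
    ((L : ℝ) ^ (2 * k))⁻¹).div_const ((L : ℝ) ^ 2 - 1)
  simpa only [hierEig, sub_zero, ← inv_pow, ← pow_mul] using h

theorem tendsto_comp_hierEig {f : ℝ → ℝ} (hf : ContinuousOn f (Set.Icc 0 ((L : ℝ) ^ 2 - 1)⁻¹))
    (k : ℕ) :
    Tendsto (fun K => f (hierEig L K k)) atTop
      (𝓝 (f (((L : ℝ) ^ (2 * k))⁻¹ / ((L : ℝ) ^ 2 - 1)))) := by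
  have h_mem : ∀ᶠ K in atTop, hierEig L K k ∈ Set.Icc 0 ((L : ℝ) ^ 2 - 1)⁻¹ :=
    (eventually_ge_atTop k).mono fun K hK => hierEig_mem_Icc hL hK
  have h_lim_mem : ((L : ℝ) ^ (2 * k))⁻¹ / ((L : ℝ) ^ 2 - 1) ∈
      Set.Icc 0 ((L : ℝ) ^ 2 - 1)⁻¹ :=
    isClosed_Icc.mem_of_tendsto (tendsto_hierEig hL k) h_mem
  exact (hf _ h_lim_mem).tendsto.comp (tendsto_nhdsWithin_iff.mpr ⟨tendsto_hierEig hL k, h_mem⟩)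

end

theorem normalized_trace_eq {L : ℕ} (hL : L ≠ 0) (d K : ℕ) (f : ℝ → ℝ) :
    ((L : ℝ) ^ (d * K))⁻¹ *
        ((∑ k ∈ Finset.range K,
            ((L : ℝ) ^ (d * (K - k)) - (L : ℝ) ^ (d * (K - k - 1))) * f (hierEig L K k)) +
          f (hierEig L K K)) =
      (1 - ((L : ℝ) ^ d)⁻¹) * ∑ k ∈ Finset.range K, ((L : ℝ) ^ d)⁻¹ ^ k * f (hierEig L K k) +
        ((L : ℝ) ^ d)⁻¹ ^ K * f 0 := by
  have hx : (L : ℝ) ^ d ≠ 0 := pow_ne_zero d (Nat.cast_ne_zero.mpr hL)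
  simp_rw [pow_mul (L : ℝ) d, hierEig_self]
  generalize (L : ℝ) ^ d = x at hx ⊢
  rw [mul_add, Finset.mul_sum, Finset.mul_sum, inv_pow]
  congr 1
  refine Finset.sum_congr rfl fun k hk => ?_
  rw [← mul_assoc, inv_pow_mul_sub_pow hx (Finset.mem_range.mp hk), mul_assoc]

/-- For every continuous `f : [0, 1/(L²−1)] → ℝ`, the normalized trace
of `f(−Δ)` converges:
`lim_{K→∞} L^{−dK} Σ_{k=0}^K m_k^{(K)} f(λ_k^{(K)})
  = (1 − L^{−d}) Σ_{k=0}^∞ L^{−dk} f(L^{−2k}/(L² − 1))`,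
where `m_k^{(K)} = L^{d(K−k)} − L^{d(K−k−1)}` for `k ≤ K−1` and `m_K^{(K)} = 1` are the
multiplicities; i.e. the empirical spectral distributions of `−Δ` converge weakly to
`ρ = (1 − L^{−d}) Σ_{k=0}^∞ L^{−dk} δ_{L^{−2k}/(L²−1)}`. -/
theorem hierarchical_empirical_spectral_limit
    (L d : ℕ) (hL : 2 ≤ L) (hd : 1 ≤ d) (f : ℝ → ℝ)
    (hf : ContinuousOn f (Set.Icc 0 (((L : ℝ) ^ 2 - 1)⁻¹))) :
    Tendsto
      (fun K : ℕ =>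
        ((L : ℝ) ^ (d * K))⁻¹ *
          ((∑ k ∈ Finset.range K,
              ((L : ℝ) ^ (d * (K - k)) - (L : ℝ) ^ (d * (K - k - 1))) * f (hierEig L K k)) +
            f (hierEig L K K)))
      atTop
      (𝓝 ((1 - ((L : ℝ) ^ d)⁻¹) *
        ∑' k : ℕ, ((L : ℝ) ^ (d * k))⁻¹ * f (((L : ℝ) ^ (2 * k))⁻¹ / ((L : ℝ) ^ 2 - 1)))) := by
  have hL₁ : 1 < L := by omega
  set r : ℝ := ((L : ℝ) ^ d)⁻¹ with hr
  have hr₀ : 0 ≤ r := by positivity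
  have hr₁ : r < 1 := inv_lt_one_of_one_lt₀ (one_lt_pow₀ (by exact_mod_cast hL₁) (by omega))
  obtain ⟨C, hC⟩ := isCompact_Icc.exists_bound_of_continuousOn hf
  have h_series := tendsto_sum_range_of_dominated
    ((summable_geometric_of_lt_one hr₀ hr₁).mul_right C)
    (fun k => (tendsto_comp_hierEig hL₁ hf k).const_mul (r ^ k))
    (fun K k hk => by
      rw [norm_mul, norm_pow, Real.norm_of_nonneg hr₀]
      exact mul_le_mul_of_nonneg_left (hC _ (hierEig_mem_Icc hL₁ hk.le)) (by positivity))
  have h_top : Tendsto (fun K => r ^ K * f 0) atTop (𝓝 0) := by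
    simpa using (tendsto_pow_atTop_nhds_zero_of_lt_one hr₀ hr₁).mul_const (f 0)
  have h_weight (k : ℕ) : ((L : ℝ) ^ (d * k))⁻¹ = r ^ k := by rw [hr, inv_pow, pow_mul]
  have h_lim := (h_series.const_mul (1 - r)).add h_top
  rw [add_zero] at h_lim
  convert h_lim.congr fun K => (normalized_trace_eq (by omega : L ≠ 0) d K f).symm using 3
  exact tsum_congr fun k => by rw [h_weight]
end

section
/- For every μ < 0, lim_{K→∞} L^{−dK} ln det( −Δ_K − μ I ) = (1 − L^{−d}) Σ_{k=0}^∞ L^{−dk} ln( L^{−2k}/(L² − 1) − μ ), where −Δ_K is the hierarchical Laplacean on ℝ^{Λ_K} (a matrix of order L^{dK}); note −Δ_K − μI is positive definite so the determinant is positive and the series converges absolutely. -/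
open Filter Topology

open Matrix

noncomputable section

/-- A digit: an element of `{0,…,L−1}^d`. -/
abbrev HierDigit (L d : ℕ) := Fin d → Fin L

/-- A site of `Λ_K`: a string `θ = (θ_1,…,θ_K)` of digits. -/
abbrev HierSite (L d K : ℕ) := Fin K → HierDigit L d

/-- The matrix of the `a`-fold block operator `B^a : ℝ^{Λ_{a+b}} → ℝ^{Λ_b}`:
`(B^a u)_τ = L^{−da/2} Σ_{η ∈ ({0,…,L−1}^d)^a} u_{(η,τ)}`.  For `a = 1` this is the
block operator `B` itself. -/
def hierB (L d : ℕ) (a b : ℕ) : Matrix (HierSite L d b) (HierSite L d (a + b)) ℝ :=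
  fun τ θ =>
    if (fun i : Fin b => θ (Fin.natAdd a i)) = τ then (Real.sqrt ((L : ℝ) ^ (d * a)))⁻¹ else 0

/-- The projection `P_k = (B*)^k B^k` on `ℝ^{Λ_K}` (for `k ≤ K`; junk value `0` otherwise). -/
def hierP (L d K : ℕ) (k : ℕ) : Matrix (HierSite L d K) (HierSite L d K) ℝ :=
  if h : k ≤ K then
    (Matrix.reindex
      (Equiv.arrowCongr (finCongr (Nat.add_sub_cancel' h)) (Equiv.refl (HierDigit L d)))
      (Equiv.arrowCongr (finCongr (Nat.add_sub_cancel' h)) (Equiv.refl (HierDigit L d))))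
      ((hierB L d k (K - k))ᵀ * hierB L d k (K - k))
  else 0

/-- The hierarchical Laplacean `−Δ_K = Σ_{k=1}^K L^{−2k}(I − P_k)` on `ℝ^{Λ_K}`. -/
def hierLap (L d K : ℕ) : Matrix (HierSite L d K) (HierSite L d K) ℝ :=
  ∑ k ∈ Finset.Icc 1 K, ((L : ℝ) ^ (2 * k))⁻¹ • ((1 : Matrix _ _ ℝ) - hierP L d K k)

/-!
Let `T` sum over the first digit of a site. Then `T Tᵀ = L^d`, conjugation by `T` sends `P_k` on
`Λ_K` to `L^d P_{k+1}` on `Λ_{K+1}`, and hence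
`−Δ_{K+1} = s • 1 − L^{-d} Tᵀ (s • 1 − L^{-2} (−Δ_K)) T` with `s = Σ_{k=1}^{K+1} L^{-2k}`.
Sylvester's identity `det (1 − XY) = det (1 − YX)` turns this into a recursion in `K` for
`det (c (−Δ_K) − μ)`, whose solution exhibits the spectrum: `0` once, and
`λ_j^K = Σ_{k=j+1}^K L^{-2k}` with multiplicity `L^{d(K−j−1)} (L^d − 1)` for `j < K`. So
`L^{-dK} ln det (−Δ_K − μ) = L^{-dK} ln (−μ) + (1 − L^{-d}) Σ_{j<K} L^{-dj} ln (λ_j^K − μ)`.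
As `K → ∞`, `λ_j^K → L^{-2j} / (L² − 1)` while `0 ≤ λ_j^K ≤ 1 / (L² − 1)`, so the logarithms stay
bounded and Tannery's theorem gives the limit.
-/

lemma Matrix.transpose_one_submatrix_mul_mul {m n R : Type*} [Fintype m] [DecidableEq m]
    [NonAssocSemiring R] (f : n → m) (M : Matrix m m R) :
    ((1 : Matrix m m R).submatrix id f)ᵀ * M * (1 : Matrix m m R).submatrix id f
      = M.submatrix f f := by
  ext θ θ'
  simp [Matrix.mul_apply, Matrix.one_apply]

theorem Matrix.pow_card_mul_det_smul_one_sub_mul_mul {m n 𝕜 : Type*} [Fintype m] [Fintype n]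
    [DecidableEq m] [DecidableEq n] [Field 𝕜] {A : Matrix n m 𝕜} {B : Matrix m n 𝕜}
    (hBA : B * A = 1) (C : Matrix m m 𝕜) {α : 𝕜} (hα : α ≠ 0) :
    α ^ Fintype.card m * (α • 1 - A * C * B).det = α ^ Fintype.card n * (α • 1 - C).det := by
  have hn : α • 1 - A * C * B = α • (1 - A * (α⁻¹ • (C * B))) := by
    rw [Matrix.mul_smul, ← Matrix.mul_assoc, smul_sub, smul_smul, mul_inv_cancel₀ hα, one_smul]
  have hm : α • 1 - C = α • (1 - α⁻¹ • (C * B) * A) := by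
    rw [Matrix.smul_mul, Matrix.mul_assoc, hBA, Matrix.mul_one, smul_sub, smul_smul,
      mul_inv_cancel₀ hα, one_smul]
  rw [hn, hm, det_smul, det_smul, det_one_sub_mul_comm]
  ring

theorem tendsto_sum_range_of_tendsto_of_norm_le {G : Type*} [NormedAddCommGroup G]
    [CompleteSpace G] {F : ℕ → ℕ → G} {f : ℕ → G} {b : ℕ → ℝ} (hb : Summable b)
    (hF : ∀ j, Tendsto (fun K => F K j) atTop (𝓝 (f j))) (hFb : ∀ K j, j < K → ‖F K j‖ ≤ b j) :
    Tendsto (fun K => ∑ j ∈ Finset.range K, F K j) atTop (𝓝 (∑' j, f j)) := by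
  have hsum (K : ℕ) : ∑' j, (if j < K then F K j else 0) = ∑ j ∈ Finset.range K, F K j := by
    rw [tsum_eq_sum (s := Finset.range K) fun j hj => if_neg (by simpa using hj)]
    exact Finset.sum_congr rfl fun j hj => if_pos (Finset.mem_range.mp hj)
  refine (tendsto_tsum_of_dominated_convergence hb (fun j => ?_) ?_).congr hsum
  · exact (hF j).congr' ((eventually_gt_atTop j).mono fun K hK => (if_pos hK).symm)
  · refine Eventually.of_forall fun K j => ?_
    split_ifs with hj
    · exact hFb K j hj
    · simpa using (norm_nonneg _).trans (hFb (j + 1) j j.lt_succ_self)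

def hierProj (L d K k : ℕ) : Matrix (HierSite L d K) (HierSite L d K) ℝ :=
  fun θ θ' => if ∀ i : Fin K, k ≤ (i : ℕ) → θ i = θ' i then ((L : ℝ) ^ (d * k))⁻¹ else 0

lemma hierP_eq_hierProj (L d : ℕ) {K k : ℕ} (hk : k ≤ K) : hierP L d K k = hierProj L d K k := by
  ext θ θ'
  have hcond : ((fun j : Fin (K - k) => θ (Fin.cast (Nat.add_sub_cancel' hk) (Fin.natAdd k j)))
      = fun j => θ' (Fin.cast (Nat.add_sub_cancel' hk) (Fin.natAdd k j)))
      ↔ ∀ i : Fin K, k ≤ (i : ℕ) → θ i = θ' i := by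
    refine funext_iff.trans ⟨fun h i hi => ?_, fun h j => h _ (by simp)⟩
    convert h ⟨i - k, by omega⟩ using 2 <;> ext <;> simp <;> omega
  simp only [hierP, dif_pos hk, Matrix.reindex_apply, Matrix.submatrix_apply, Matrix.mul_apply,
    Matrix.transpose_apply, hierB, Equiv.arrowCongr_symm, finCongr_symm, Equiv.refl_symm, Equiv.arrowCongr_apply,
    Equiv.coe_refl, Function.comp_apply, finCongr_apply, id_eq, mul_ite, ite_mul, zero_mul,
    mul_zero, Finset.sum_ite_eq, Finset.mem_univ, ↓reduceIte]
  have hsqrt : (√((L : ℝ) ^ (d * k)))⁻¹ * (√((L : ℝ) ^ (d * k)))⁻¹ = ((L : ℝ) ^ (d * k))⁻¹ := by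
    rw [← mul_inv, Real.mul_self_sqrt (by positivity)]
  simp only [hcond, hsqrt, hierProj]

lemma hierProj_zero (L d K : ℕ) : hierProj L d K 0 = 1 := by
  ext θ θ'
  simp [hierProj, Matrix.one_apply, funext_iff]

lemma hierProj_succ_succ (L d n k : ℕ) :
    hierProj L d (n + 1) (k + 1)
      = ((L : ℝ) ^ d)⁻¹ • (hierProj L d n k).submatrix Fin.tail Fin.tail := by
  ext θ θ'
  have hcond : (∀ i : Fin (n + 1), k + 1 ≤ (i : ℕ) → θ i = θ' i)
      ↔ ∀ i : Fin n, k ≤ (i : ℕ) → Fin.tail θ i = Fin.tail θ' i := by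
    simp [Fin.forall_fin_succ, Fin.tail]
  simp only [hierProj, hcond, Matrix.smul_apply, Matrix.submatrix_apply, smul_eq_mul, mul_ite,
    mul_zero]
  congr 1
  ring

-- `T u` sums `u` over the first digit, so `L^{-d} • Tᵀ * M * T = B* M B` for the block operator
-- `B = L^{-d/2} T`; splitting the normalisation unevenly keeps square roots out of the algebra.
def hierTail (L d n : ℕ) : Matrix (HierSite L d n) (HierSite L d (n + 1)) ℝ :=
  (1 : Matrix (HierSite L d n) (HierSite L d n) ℝ).submatrix id Fin.tail

lemma hierTail_mul_transpose (L d n : ℕ) :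
    hierTail L d n * (hierTail L d n)ᵀ = ((L : ℝ) ^ d) • 1 := by
  ext τ τ'
  simp only [hierTail, Matrix.mul_apply, Matrix.transpose_apply, Matrix.submatrix_apply]
  rw [← (Fin.consEquiv (fun _ : Fin (n + 1) => HierDigit L d)).sum_comp, Fintype.sum_prod_type]
  simp [Matrix.one_apply, Fin.consEquiv]

lemma transpose_hierTail_mul_hierProj_mul {L : ℕ} (hL : L ≠ 0) (d n k : ℕ) :
    (hierTail L d n)ᵀ * hierProj L d n k * hierTail L d n
      = ((L : ℝ) ^ d) • hierProj L d (n + 1) (k + 1) := by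
  rw [hierTail, Matrix.transpose_one_submatrix_mul_mul, hierProj_succ_succ, smul_smul,
    mul_inv_cancel₀ (by positivity), one_smul]

lemma transpose_hierTail_mul_hierTail {L : ℕ} (hL : L ≠ 0) (d n : ℕ) :
    (hierTail L d n)ᵀ * hierTail L d n = ((L : ℝ) ^ d) • hierProj L d (n + 1) 1 := by
  rw [← transpose_hierTail_mul_hierProj_mul hL, hierProj_zero, Matrix.mul_one]

def hierEigenvalue (L K j : ℕ) : ℝ :=
  ∑ k ∈ Finset.range (K - j), ((L : ℝ) ^ (2 * (j + k + 1)))⁻¹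

def hierMultiplicity (L d K j : ℕ) : ℕ := L ^ (d * (K - j - 1)) * (L ^ d - 1)

lemma hierEigenvalue_nonneg (L K j : ℕ) : 0 ≤ hierEigenvalue L K j :=
  Finset.sum_nonneg fun _ _ => by positivity

lemma hierEigenvalue_succ_succ (L n j : ℕ) :
    hierEigenvalue L (n + 1) (j + 1) = ((L : ℝ) ^ 2)⁻¹ * hierEigenvalue L n j := by
  rw [hierEigenvalue, hierEigenvalue, Nat.add_sub_add_right, Finset.mul_sum]
  refine Finset.sum_congr rfl fun k _ => ?_
  rw [← mul_inv, ← pow_add]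
  ring_nf

lemma hierMultiplicity_succ_succ (L d n j : ℕ) :
    hierMultiplicity L d (n + 1) (j + 1) = hierMultiplicity L d n j := by
  simp [hierMultiplicity]

lemma hierLap_eq_sum_range (L d K : ℕ) :
    hierLap L d K = ∑ j ∈ Finset.range K,
      ((L : ℝ) ^ (2 * (j + 1)))⁻¹ • (1 - hierProj L d K (j + 1)) := by
  rw [hierLap, ← Finset.Ico_add_one_right_eq_Icc, Finset.sum_Ico_eq_sum_range]
  refine Finset.sum_congr rfl fun j hj => ?_
  rw [add_comm 1 j, hierP_eq_hierProj L d (by simp at hj; omega)]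

lemma hierLap_succ {L : ℕ} (hL : L ≠ 0) (d n : ℕ) :
    hierLap L d (n + 1) = hierEigenvalue L (n + 1) 0 • 1
      - ((L : ℝ) ^ d)⁻¹ • (hierTail L d n)ᵀ
        * (hierEigenvalue L (n + 1) 0 • 1 - ((L : ℝ) ^ 2)⁻¹ • hierLap L d n) * hierTail L d n := by
  have hLd : ((L : ℝ) ^ d)⁻¹ * (L : ℝ) ^ d = 1 := inv_mul_cancel₀ (by positivity)
  have hshift (j : ℕ) :
      ((L : ℝ) ^ 2)⁻¹ * ((L : ℝ) ^ (2 * (j + 1)))⁻¹ = ((L : ℝ) ^ (2 * (j + 1 + 1)))⁻¹ := by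
    rw [← mul_inv, ← pow_add]; ring_nf
  have hs : hierEigenvalue L (n + 1) 0
      = ((L : ℝ) ^ 2)⁻¹ + ∑ j ∈ Finset.range n, ((L : ℝ) ^ (2 * (j + 1 + 1)))⁻¹ := by
    simp [hierEigenvalue, Finset.sum_range_succ' _ n, add_comm]
  simp only [hierLap_eq_sum_range, Matrix.mul_sub, Matrix.sub_mul, Matrix.mul_smul,
    Matrix.smul_mul, Matrix.mul_sum, Matrix.sum_mul, Matrix.mul_one,
    transpose_hierTail_mul_hierTail hL, transpose_hierTail_mul_hierProj_mul hL, smul_smul,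
    mul_assoc, hLd, mul_one, Finset.smul_sum, hshift, smul_sub, Finset.sum_sub_distrib]
  rw [hs]
  simp only [Finset.sum_range_succ' _ n, add_smul, Finset.sum_smul, zero_add, mul_one]
  abel

lemma smul_hierLap_succ_sub_smul_one {L : ℕ} (hL : L ≠ 0) (d n : ℕ) (c μ : ℝ) :
    c • hierLap L d (n + 1) - μ • 1
      = (c * hierEigenvalue L (n + 1) 0 - μ) • 1 - ((L : ℝ) ^ d)⁻¹ • (hierTail L d n)ᵀ
        * ((c * hierEigenvalue L (n + 1) 0 - μ) • 1
          - ((c * ((L : ℝ) ^ 2)⁻¹) • hierLap L d n - μ • 1)) * hierTail L d n := by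
  rw [hierLap_succ hL]
  simp only [Matrix.mul_sub, Matrix.sub_mul, Matrix.mul_smul, Matrix.smul_mul]
  module

lemma card_hierSite (L d n : ℕ) : Fintype.card (HierSite L d n) = L ^ (d * n) := by
  simp [← pow_mul]

theorem det_smul_hierLap_sub_smul_one {L : ℕ} (hL : L ≠ 0) (d K : ℕ) {c μ : ℝ} (hc : 0 ≤ c)
    (hμ : μ < 0) :
    (c • hierLap L d K - μ • 1).det
      = -μ * ∏ j ∈ Finset.range K, (c * hierEigenvalue L K j - μ) ^ hierMultiplicity L d K j := by
  -- The scaling `c` absorbs the factor `L^{-2}` that `hierLap_succ` puts in front of `−Δ_K`.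
  induction K generalizing c with
  | zero =>
    simp [hierLap, ← neg_smul]
  | succ n ih =>
    set α := c * hierEigenvalue L (n + 1) 0 - μ
    have hα : α ≠ 0 := by
      have := mul_nonneg hc (hierEigenvalue_nonneg L (n + 1) 0)
      exact ne_of_gt (by linarith)
    have hTA : hierTail L d n * (((L : ℝ) ^ d)⁻¹ • (hierTail L d n)ᵀ) = 1 := by
      rw [Matrix.mul_smul, hierTail_mul_transpose, smul_smul, inv_mul_cancel₀ (by positivity),
        one_smul]
    have hstep := Matrix.pow_card_mul_det_smul_one_sub_mul_mul hTA
      (α • 1 - ((c * ((L : ℝ) ^ 2)⁻¹) • hierLap L d n - μ • 1)) hα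
    rw [sub_sub_cancel, ih (by positivity), ← smul_hierLap_succ_sub_smul_one hL,
      card_hierSite, card_hierSite] at hstep
    have hcard : L ^ (d * (n + 1)) = L ^ (d * n) + hierMultiplicity L d (n + 1) 0 := by
      simp only [hierMultiplicity, Nat.sub_zero, Nat.add_sub_cancel, mul_add, mul_one, pow_add]
      rw [Nat.mul_sub_one, Nat.add_sub_cancel' (Nat.le_mul_of_pos_right _ (by positivity))]
    rw [hcard, pow_add, mul_assoc] at hstep
    rw [mul_left_cancel₀ (pow_ne_zero _ hα) hstep, Finset.prod_range_succ']
    simp only [hierEigenvalue_succ_succ, hierMultiplicity_succ_succ, α, mul_assoc]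
    ring

lemma inv_pow_mul_hierMultiplicity {L : ℕ} (hL : L ≠ 0) (d : ℕ) {K j : ℕ} (hjK : j < K) :
    ((L : ℝ) ^ (d * K))⁻¹ * (hierMultiplicity L d K j : ℝ)
      = (1 - ((L : ℝ) ^ d)⁻¹) * ((L : ℝ) ^ (d * j))⁻¹ := by
  obtain ⟨m, rfl⟩ : ∃ m, K = j + m + 1 := ⟨K - j - 1, by omega⟩
  have : (L : ℝ) ≠ 0 := by exact_mod_cast hL
  rw [hierMultiplicity, show j + m + 1 - j - 1 = m by omega, Nat.cast_mul,
    Nat.cast_sub (Nat.one_le_pow _ _ (Nat.pos_of_ne_zero hL))]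
  push_cast
  field_simp
  ring

lemma inv_pow_mul_log_det_hierLap_sub {L : ℕ} (hL : L ≠ 0) (d K : ℕ) {μ : ℝ} (hμ : μ < 0) :
    ((L : ℝ) ^ (d * K))⁻¹ * Real.log (hierLap L d K - μ • 1).det
      = ((L : ℝ) ^ (d * K))⁻¹ * Real.log (-μ) + (1 - ((L : ℝ) ^ d)⁻¹) *
        ∑ j ∈ Finset.range K, ((L : ℝ) ^ (d * j))⁻¹ * Real.log (hierEigenvalue L K j - μ) := by
  have hpos (j : ℕ) : 0 < hierEigenvalue L K j - μ := by
    linarith [hierEigenvalue_nonneg L K j]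
  have hdet := det_smul_hierLap_sub_smul_one hL d K zero_le_one hμ
  simp only [one_smul, one_mul] at hdet
  rw [hdet, Real.log_mul (by linarith) (Finset.prod_ne_zero_iff.mpr fun j _ =>
    pow_ne_zero _ (hpos j).ne'), Real.log_prod fun j _ => pow_ne_zero _ (hpos j).ne', mul_add,
    Finset.mul_sum, Finset.mul_sum]
  congr 1
  refine Finset.sum_congr rfl fun j hj => ?_
  rw [Real.log_pow, ← mul_assoc, inv_pow_mul_hierMultiplicity hL d (Finset.mem_range.mp hj),
    mul_assoc]

def hierEigenvalueLimit (L j : ℕ) : ℝ := ((L : ℝ) ^ (2 * j))⁻¹ / ((L : ℝ) ^ 2 - 1)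

lemma hierEigenvalue_self (L j : ℕ) : hierEigenvalue L j j = 0 := by
  simp [hierEigenvalue]

lemma hierEigenvalue_succ (L : ℕ) {j K : ℕ} (hjK : j ≤ K) :
    hierEigenvalue L (K + 1) j = hierEigenvalue L K j + ((L : ℝ) ^ (2 * (K + 1)))⁻¹ := by
  rw [hierEigenvalue, Nat.sub_add_comm hjK, Finset.sum_range_succ, Nat.add_sub_cancel' hjK,
    ← hierEigenvalue]

lemma hierEigenvalueLimit_sub_succ {L : ℕ} (hL : 1 < L) (i : ℕ) :
    hierEigenvalueLimit L i - hierEigenvalueLimit L (i + 1) = ((L : ℝ) ^ (2 * (i + 1)))⁻¹ := by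
  have : (1 : ℝ) < L := by exact_mod_cast hL
  have : (L : ℝ) ^ 2 - 1 ≠ 0 := by nlinarith
  rw [hierEigenvalueLimit, hierEigenvalueLimit]
  field_simp
  ring_nf

lemma hierEigenvalue_eq_sub {L : ℕ} (hL : 1 < L) {j K : ℕ} (hjK : j ≤ K) :
    hierEigenvalue L K j = hierEigenvalueLimit L j - hierEigenvalueLimit L K := by
  induction K, hjK using Nat.le_induction with
  | base => rw [hierEigenvalue_self, sub_self]
  | succ K hjK ih =>
    rw [hierEigenvalue_succ L hjK, ih, ← hierEigenvalueLimit_sub_succ hL]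
    ring

lemma hierEigenvalueLimit_nonneg {L : ℕ} (hL : 1 < L) (j : ℕ) : 0 ≤ hierEigenvalueLimit L j := by
  have : (1 : ℝ) < L := by exact_mod_cast hL
  have : 0 ≤ (L : ℝ) ^ 2 - 1 := by nlinarith
  unfold hierEigenvalueLimit
  positivity

lemma hierEigenvalueLimit_antitone {L : ℕ} (hL : 1 < L) : Antitone (hierEigenvalueLimit L) := by
  intro i j hij
  have : (1 : ℝ) < L := by exact_mod_cast hL
  have : 0 ≤ (L : ℝ) ^ 2 - 1 := by nlinarith
  unfold hierEigenvalueLimit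
  gcongr
  linarith

lemma tendsto_hierEigenvalueLimit {L : ℕ} (hL : 1 < L) :
    Tendsto (hierEigenvalueLimit L) atTop (𝓝 0) := by
  have : (1 : ℝ) < L := by exact_mod_cast hL
  have h : Tendsto (fun K : ℕ => (((L : ℝ) ^ 2)⁻¹) ^ K) atTop (𝓝 0) :=
    tendsto_pow_atTop_nhds_zero_of_lt_one (by positivity) (inv_lt_one_of_one_lt₀ (by nlinarith))
  convert h.div_const ((L : ℝ) ^ 2 - 1) using 2 with K
  · simp [hierEigenvalueLimit, pow_mul, inv_pow]
  · simp

lemma tendsto_hierEigenvalue {L : ℕ} (hL : 1 < L) (j : ℕ) :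
    Tendsto (fun K => hierEigenvalue L K j) atTop (𝓝 (hierEigenvalueLimit L j)) := by
  have h := (tendsto_hierEigenvalueLimit hL).const_sub (hierEigenvalueLimit L j)
  rw [sub_zero] at h
  exact h.congr' ((eventually_ge_atTop j).mono fun K hK => (hierEigenvalue_eq_sub hL hK).symm)

lemma tendsto_sum_range_mul_log_hierEigenvalue_sub {L : ℕ} (hL : 1 < L) {μ : ℝ} (hμ : μ < 0)
    {w : ℕ → ℝ} (hw : Summable w) :
    Tendsto (fun K => ∑ j ∈ Finset.range K, w j * Real.log (hierEigenvalue L K j - μ)) atTop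
      (𝓝 (∑' j, w j * Real.log (hierEigenvalueLimit L j - μ))) := by
  set M := max |Real.log (-μ)| |Real.log (hierEigenvalueLimit L 0 - μ)|
  refine tendsto_sum_range_of_tendsto_of_norm_le (b := fun j => |w j| * M) (hw.abs.mul_right M)
    (fun j => ?_) (fun K j hjK => ?_)
  · refine ((tendsto_hierEigenvalue hL j).sub_const μ).log ?_ |>.const_mul (w j)
    linarith [hierEigenvalueLimit_nonneg hL j]
  · have h0 := hierEigenvalue_nonneg L K j
    have h1 : hierEigenvalue L K j ≤ hierEigenvalueLimit L 0 := by
      rw [hierEigenvalue_eq_sub hL hjK.le]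
      linarith [hierEigenvalueLimit_nonneg hL K, hierEigenvalueLimit_antitone hL j.zero_le]
    rw [Real.norm_eq_abs, abs_mul]
    refine mul_le_mul_of_nonneg_left (abs_le_max_abs_abs ?_ ?_) (abs_nonneg _)
    · exact Real.log_le_log (by linarith) (by linarith)
    · exact Real.log_le_log (by linarith) (by linarith)

/-- For every `μ < 0`,
`lim_{K→∞} L^{−dK} ln det(−Δ_K − μI)
  = (1 − L^{−d}) Σ_{k=0}^∞ L^{−dk} ln(L^{−2k}/(L² − 1) − μ)`,
where `−Δ_K` is the hierarchical Laplacean on `ℝ^{Λ_K}` (a matrix of order `L^{dK}`). -/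
theorem hierarchical_log_det_limit
    (L d : ℕ) (hL : 2 ≤ L) (hd : 1 ≤ d) (μ : ℝ) (hμ : μ < 0) :
    Tendsto
      (fun K : ℕ =>
        ((L : ℝ) ^ (d * K))⁻¹ *
          Real.log (hierLap L d K - μ • (1 : Matrix _ _ ℝ)).det)
      atTop
      (𝓝 ((1 - ((L : ℝ) ^ d)⁻¹) *
        ∑' k : ℕ,
          ((L : ℝ) ^ (d * k))⁻¹ *
            Real.log (((L : ℝ) ^ (2 * k))⁻¹ / ((L : ℝ) ^ 2 - 1) - μ))) := by
  have hLd : 1 < (L : ℝ) ^ d := one_lt_pow₀ (by exact_mod_cast hL) (by omega : d ≠ 0)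
  have hw : Summable fun j : ℕ => ((L : ℝ) ^ (d * j))⁻¹ := by
    simpa [pow_mul, inv_pow] using
      summable_geometric_of_lt_one (by positivity) (inv_lt_one_of_one_lt₀ hLd)
  have hvanish := (hw.tendsto_atTop_zero.mul_const (Real.log (-μ))).add
    ((tendsto_sum_range_mul_log_hierEigenvalue_sub (by omega : 1 < L) hμ hw).const_mul
      (1 - ((L : ℝ) ^ d)⁻¹))
  rw [zero_mul, zero_add] at hvanish
  simp only [inv_pow_mul_log_det_hierLap_sub (by omega : L ≠ 0) d _ hμ]
  exact hvanish

end
end
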